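/- Let α ∈ (0,1), let θπ belong to the interior of Θ, and define f(θ) = (1/(α−1)) · log ∫ q_{θπ}(x)^α q_θ(x)^{1−α} ν(dx) for θ ∈ Θ (the Rényi divergence RD_α(q_{θπ}, q_θ)). Assume A is strictly convex on Θ. Then: (a) f(θ) ≥ 0 for every θ ∈ Θ, with f(θ) = 0 if and only if θ = θπ, so θπ is the unique minimizer of f and the minimum value is 0; (b) if moreover A is differentiable on the interior of Θ, then f is differentiable on the interior of Θ with gradient ∇f(θ) = ∇A(θ) − ∇A(α θπ + (1−α) θ), and for θ in the interior of Θ one has ∇f(θ) = 0 if and only if θ = θπ, so θπ is the unique stationary point of f. -/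

import Mathlib

/-!
With `τ = α θπ + (1 - α) θ`, the Rényi integrand factorises as
`q_θπ ^ α * q_θ ^ (1 - α) = exp ⟪τ, Γ⟫ * exp (-(α A θπ + (1 - α) A θ))`, so on `Θ`
`f θ = J_α(θπ, θ) / (1 - α)`, where `J_α(θ₁, θ₂) = α A θ₁ + (1 - α) A θ₂ - A (α θ₁ + (1 - α) θ₂)`
is the skew Jensen divergence of `A`. Strict convexity of `A` makes `J_α ≥ 0` with equality
only on the diagonal. Differentiating gives `∇f θ = ∇A θ - ∇A τ`; since `θ - τ = α (θ - θπ)`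
and a strictly convex function has a strictly monotone gradient (restrict it to a segment),
this vanishes only at `θπ`.
-/

open MeasureTheory Real Function
open scoped RealInnerProductSpace

theorem StrictConvexOn.comp_affineMap_of_injective {𝕜 E F β : Type*} [Ring 𝕜] [PartialOrder 𝕜]
    [AddCommGroup E] [AddCommGroup F] [AddCommMonoid β] [PartialOrder β]
    [Module 𝕜 E] [Module 𝕜 F] [SMul 𝕜 β] {f : F → β} {s : Set F}
    (hf : StrictConvexOn 𝕜 s f) (g : E →ᵃ[𝕜] F) (hg : Injective g) :
    StrictConvexOn 𝕜 (g ⁻¹' s) (f ∘ g) :=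
  ⟨hf.1.affine_preimage g, fun _ hx _ hy hxy _ _ ha hb hab => by
    simpa only [comp_apply, Convex.combo_affine_apply hab] using
      hf.2 hx hy (hg.ne hxy) ha hb hab⟩

def skewJensenDivergence {E : Type*} [AddCommGroup E] [Module ℝ E] (A : E → ℝ) (α : ℝ)
    (θ₁ θ₂ : E) : ℝ :=
  α * A θ₁ + (1 - α) * A θ₂ - A (α • θ₁ + (1 - α) • θ₂)

section SkewJensen

variable {E : Type*} [AddCommGroup E] [Module ℝ E] {s : Set E} {A : E → ℝ} {α : ℝ} {θ₁ θ₂ : E}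

theorem ConvexOn.skewJensenDivergence_nonneg (hA : ConvexOn ℝ s A) (hα : α ∈ Set.Icc (0 : ℝ) 1)
    (h₁ : θ₁ ∈ s) (h₂ : θ₂ ∈ s) :
    0 ≤ skewJensenDivergence A α θ₁ θ₂ :=
  sub_nonneg.2 (hA.2 h₁ h₂ hα.1 (sub_nonneg.2 hα.2) (add_sub_cancel _ _))

theorem StrictConvexOn.skewJensenDivergence_eq_zero_iff (hA : StrictConvexOn ℝ s A)
    (hα : α ∈ Set.Ioo (0 : ℝ) 1) (h₁ : θ₁ ∈ s) (h₂ : θ₂ ∈ s) :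
    skewJensenDivergence A α θ₁ θ₂ = 0 ↔ θ₁ = θ₂ := by
  constructor
  · intro h
    by_contra hne
    have hlt := hA.2 h₁ h₂ hne hα.1 (sub_pos.2 hα.2) (add_sub_cancel _ _)
    simp only [smul_eq_mul] at hlt
    rw [skewJensenDivergence] at h
    linarith
  · rintro rfl
    simp only [skewJensenDivergence, ← add_smul, add_sub_cancel, one_smul]
    ring

end SkewJensen

section Gradient

variable {E : Type*} [NormedAddCommGroup E] [InnerProductSpace ℝ E] [CompleteSpace E]
  {s : Set E} {A : E → ℝ} {gA : E → E} {α : ℝ} {θ₁ : E}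

theorem StrictConvexOn.inner_gradient_lt_inner_gradient (hA : StrictConvexOn ℝ s A)
    {x y gx gy : E} (hx : x ∈ s) (hy : y ∈ s) (hxy : x ≠ y)
    (hgx : HasGradientAt A gx x) (hgy : HasGradientAt A gy y) :
    ⟪gx, y - x⟫ < ⟪gy, y - x⟫ := by
  set l : ℝ →ᵃ[ℝ] E := AffineMap.lineMap x y
  have hl : StrictConvexOn ℝ (l ⁻¹' s) (A ∘ l) :=
    hA.comp_affineMap_of_injective l (AffineMap.lineMap_injective ℝ hxy)
  have h0 : (0 : ℝ) ∈ l ⁻¹' s := by simpa [l] using hx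
  have h1 : (1 : ℝ) ∈ l ⁻¹' s := by simpa [l] using hy
  have hd : ∀ {t : ℝ} {g : E}, HasGradientAt A g (l t) → HasDerivAt (A ∘ l) ⟪g, y - x⟫ t :=
    fun hg => by simpa using hg.hasFDerivAt.comp_hasDerivAt _ AffineMap.hasDerivAt_lineMap
  exact (hl.lt_slope_of_hasDerivAt h0 h1 one_pos (hd (by simpa [l] using hgx))).trans
    (hl.slope_lt_of_hasDerivAt h0 h1 one_pos (hd (by simpa [l] using hgy)))

theorem StrictConvexOn.eq_of_hasGradientAt_eq (hA : StrictConvexOn ℝ s A)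
    {x y g : E} (hx : x ∈ s) (hy : y ∈ s)
    (hgx : HasGradientAt A g x) (hgy : HasGradientAt A g y) : x = y := by
  by_contra hxy
  exact (hA.inner_gradient_lt_inner_gradient hx hy hxy hgx hgy).false

theorem hasGradientAt_skewJensenDivergence_div (hα : α ≠ 1) {θ : E}
    (hθ : HasGradientAt A (gA θ) θ)
    (hτ : HasGradientAt A (gA (α • θ₁ + (1 - α) • θ)) (α • θ₁ + (1 - α) • θ)) :
    HasGradientAt (fun θ => skewJensenDivergence A α θ₁ θ / (1 - α))
      (gA θ - gA (α • θ₁ + (1 - α) • θ)) θ := by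
  have hline : HasFDerivAt (fun θ : E => α • θ₁ + (1 - α) • θ)
      ((1 - α) • ContinuousLinearMap.id ℝ E) θ :=
    ((hasFDerivAt_id θ).const_smul (1 - α)).const_add (α • θ₁)
  have hJ := HasFDerivAt.mul_const (((hθ.hasFDerivAt.const_mul (1 - α)).const_add (α * A θ₁)).sub
    (hτ.hasFDerivAt.comp θ hline)) (1 - α)⁻¹
  rw [hasGradientAt_iff_hasFDerivAt]
  have : 1 - α ≠ 0 := sub_ne_zero.2 hα.symm
  refine (hJ.congr_fderiv ?_).congr_of_eventuallyEq (.of_forall fun θ' => ?_)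
  · ext v
    simp only [ContinuousLinearMap.comp_smulₛₗ, Real.ringHom_apply, ContinuousLinearMap.comp_id,
      smul_apply, sub_apply, InnerProductSpace.toDual_apply_apply, smul_eq_mul, map_sub]
    field_simp
  · simp only [skewJensenDivergence, Pi.sub_apply, comp_apply, div_eq_mul_inv]

theorem StrictConvexOn.gradient_sub_gradient_combo_eq_zero_iff (hA : StrictConvexOn ℝ s A)
    (hα : α ∈ Set.Ioo (0 : ℝ) 1) {θ : E} (h₁ : θ₁ ∈ s) (hθ : θ ∈ s)
    (hgθ : HasGradientAt A (gA θ) θ)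
    (hgτ : HasGradientAt A (gA (α • θ₁ + (1 - α) • θ)) (α • θ₁ + (1 - α) • θ)) :
    gA θ - gA (α • θ₁ + (1 - α) • θ) = 0 ↔ θ = θ₁ := by
  have hτ : α • θ₁ + (1 - α) • θ ∈ s :=
    hA.1 h₁ hθ hα.1.le (sub_nonneg.2 hα.2.le) (add_sub_cancel _ _)
  refine ⟨fun h => ?_, fun h => by simp [h, ← add_smul]⟩
  rw [sub_eq_zero] at h
  have hθτ := hA.eq_of_hasGradientAt_eq hθ hτ hgθ (h ▸ hgτ)
  have hsmul : α • (θ - θ₁) = 0 := by rw [← sub_eq_zero.2 hθτ]; module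
  exact sub_eq_zero.1 ((smul_eq_zero.1 hsmul).resolve_left hα.1.ne')

end Gradient

section ExponentialFamily

variable {X H : Type*} [MeasurableSpace X] (ν : Measure X) [NormedAddCommGroup H]
  [InnerProductSpace ℝ H] (Γ : X → H)

noncomputable def logPartition (θ : H) : ℝ := log (∫ x, exp ⟪θ, Γ x⟫ ∂ν)

noncomputable def expFamilyDensity (θ : H) (x : X) : ℝ := exp (⟪θ, Γ x⟫ - logPartition ν Γ θ)

variable {ν Γ}

theorem log_integral_expFamilyDensity_rpow_mul_rpow (hν : ν ≠ 0) {a b : ℝ} {θ₁ θ₂ : H}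
    (hint : Integrable (fun x => exp ⟪a • θ₁ + b • θ₂, Γ x⟫) ν) :
    log (∫ x, expFamilyDensity ν Γ θ₁ x ^ a * expFamilyDensity ν Γ θ₂ x ^ b ∂ν)
      = logPartition ν Γ (a • θ₁ + b • θ₂)
        - (a * logPartition ν Γ θ₁ + b * logPartition ν Γ θ₂) := by
  have : NeZero ν := ⟨hν⟩
  have hfactor : ∀ x, expFamilyDensity ν Γ θ₁ x ^ a * expFamilyDensity ν Γ θ₂ x ^ b
      = exp ⟪a • θ₁ + b • θ₂, Γ x⟫
        * exp (-(a * logPartition ν Γ θ₁ + b * logPartition ν Γ θ₂)) := by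
    intro x
    simp only [expFamilyDensity, ← exp_mul, ← exp_add, inner_add_left, real_inner_smul_left]
    congr 1
    ring
  simp only [hfactor, integral_mul_const]
  rw [log_mul (integral_exp_pos hint).ne' (exp_pos _).ne', log_exp]
  unfold logPartition
  ring

end ExponentialFamily

theorem statement9_general
    {X : Type*} [MeasurableSpace X] (ν : Measure X) (hν : ν ≠ 0)
    {H : Type*} [NormedAddCommGroup H] [InnerProductSpace ℝ H] [FiniteDimensional ℝ H]
    (Γ : X → H)
    (Θ : Set H) (hΘ : Θ = {θ : H | Integrable (fun x => exp ⟪θ, Γ x⟫) ν})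
    (A : H → ℝ) (hA : ∀ θ, A θ = log (∫ x, exp ⟪θ, Γ x⟫ ∂ν))
    (q : H → X → ℝ) (hq : ∀ θ x, q θ x = exp (⟪θ, Γ x⟫ - A θ))
    (α : ℝ) (hα : α ∈ Set.Ioo (0:ℝ) 1)
    (θπ : H) (hθπ : θπ ∈ interior Θ)
    (f : H → ℝ)
    (hf : ∀ θ, f θ = (1/(α-1)) * log (∫ x, q θπ x ^ α * q θ x ^ (1-α) ∂ν))
    (hstrict : StrictConvexOn ℝ Θ A) :
    (∀ θ ∈ Θ, 0 ≤ f θ ∧ (f θ = 0 ↔ θ = θπ)) ∧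
    (∀ gA : H → H, (∀ θ ∈ interior Θ, HasGradientAt A (gA θ) θ) →
      ∀ θ ∈ interior Θ,
        HasGradientAt f (gA θ - gA (α • θπ + (1 - α) • θ)) θ ∧
        (gA θ - gA (α • θπ + (1 - α) • θ) = 0 ↔ θ = θπ)) := by
  obtain rfl : A = logPartition ν Γ := funext hA
  obtain rfl : q = expFamilyDensity ν Γ := funext₂ hq
  have hθπΘ : θπ ∈ Θ := interior_subset hθπ
  have hfJ : ∀ θ ∈ Θ, f θ = skewJensenDivergence (logPartition ν Γ) α θπ θ / (1 - α) := by
    intro θ hθ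
    have hτ : α • θπ + (1 - α) • θ ∈ Θ :=
      hstrict.1 hθπΘ hθ hα.1.le (sub_nonneg.2 hα.2.le) (add_sub_cancel _ _)
    rw [hf, log_integral_expFamilyDensity_rpow_mul_rpow hν (hΘ.le hτ), skewJensenDivergence]
    have h₁ : 1 - α ≠ 0 := (sub_pos.2 hα.2).ne'
    have h₂ : α - 1 ≠ 0 := (sub_neg.2 hα.2).ne
    field_simp
    ring
  refine ⟨fun θ hθ => ⟨?_, ?_⟩, fun gA hgA θ hθ => ?_⟩
  · exact hfJ θ hθ ▸ div_nonneg (hstrict.convexOn.skewJensenDivergence_nonneg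
      (Set.Ioo_subset_Icc_self hα) hθπΘ hθ) (sub_nonneg.2 hα.2.le)
  · rw [hfJ θ hθ, div_eq_zero_iff, hstrict.skewJensenDivergence_eq_zero_iff hα hθπΘ hθ,
      or_iff_left (sub_pos.2 hα.2).ne', eq_comm]
  have hτ : α • θπ + (1 - α) • θ ∈ interior Θ :=
    hstrict.1.combo_self_interior_mem_interior hθπΘ hθ hα.1.le (sub_pos.2 hα.2)
      (add_sub_cancel _ _)
  have hgθ := hgA θ hθ
  have hgτ := hgA _ hτ
  refine ⟨(hasGradientAt_skewJensenDivergence_div hα.2.ne hgθ hgτ).congr_of_eventuallyEq ?_,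
    hstrict.gradient_sub_gradient_combo_eq_zero_iff hα hθπΘ (interior_subset hθ) hgθ hgτ⟩
  filter_upwards [isOpen_interior.mem_nhds hθ] with θ' hθ' using hfJ θ' (interior_subset hθ')

/-- When the target is a member `q_θπ` of the family with `θπ` in the interior of `Θ` and
`A` is strictly convex: (a) the Rényi divergence `f` is nonnegative on `Θ` and vanishes
exactly at `θπ`, so `θπ` is the unique minimizer with minimum value `0`; (b) if `A` is
differentiable on the interior of `Θ` with gradient map `gA`, then `f` has gradient
`gA θ - gA (α θπ + (1-α) θ)` on the interior of `Θ`, which vanishes iff `θ = θπ`,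
so `θπ` is the unique stationary point. -/
theorem statement9
    {X : Type*} [MeasurableSpace X] (ν : Measure X) [SigmaFinite ν] (hν : ν ≠ 0)
    {H : Type*} [NormedAddCommGroup H] [InnerProductSpace ℝ H] [FiniteDimensional ℝ H]
    [MeasurableSpace H] [BorelSpace H]
    (Γ : X → H) (hΓ : Measurable Γ)
    (Θ : Set H) (hΘ : Θ = {θ : H | Integrable (fun x => exp ⟪θ, Γ x⟫) ν})
    (A : H → ℝ) (hA : ∀ θ, A θ = log (∫ x, exp ⟪θ, Γ x⟫ ∂ν))
    (q : H → X → ℝ) (hq : ∀ θ x, q θ x = exp (⟪θ, Γ x⟫ - A θ))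
    (α : ℝ) (hα : α ∈ Set.Ioo (0:ℝ) 1)
    (θπ : H) (hθπ : θπ ∈ interior Θ)
    (f : H → ℝ)
    (hf : ∀ θ, f θ = (1/(α-1)) * log (∫ x, q θπ x ^ α * q θ x ^ (1-α) ∂ν))
    (hstrict : StrictConvexOn ℝ Θ A) :
    (∀ θ ∈ Θ, 0 ≤ f θ ∧ (f θ = 0 ↔ θ = θπ)) ∧
    (∀ gA : H → H, (∀ θ ∈ interior Θ, HasGradientAt A (gA θ) θ) →
      ∀ θ ∈ interior Θ,
        HasGradientAt f (gA θ - gA (α • θπ + (1 - α) • θ)) θ ∧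
        (gA θ - gA (α • θπ + (1 - α) • θ) = 0 ↔ θ = θπ)) :=
  statement9_general ν hν Γ Θ hΘ A hA q hq α hα θπ hθπ f hf hstrict
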